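/- arXiv:2004.14637 — 2 statements merged into one kernel-verified Lean document; each statement's English description precedes it below -/
import Mathlib

section
/- Under the CoCoA update rule for λ = 0 (as in the previous context), the global iterate satisfies the closed-form recursion x̂^{t+1} = (I_p − (1/K) Ā A) x̂^t + (1/K) Ā y, where Ā = [A₁⁺; …; A_K⁺]. -/
open Matrix

def IsMoorePenrose {m n : Type*} [Fintype m] [Fintype n] [DecidableEq m] [DecidableEq n]
    (M : Matrix m n ℝ) (P : Matrix n m ℝ) : Prop :=
  M * P * M = M ∧ P * M * P = P ∧ (M * P)ᵀ = M * P ∧ (P * M)ᵀ = P * M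

def colBlock {n K : ℕ} {p : Fin K → ℕ} (A : Matrix (Fin n) (Σ k : Fin K, Fin (p k)) ℝ)
    (k : Fin K) : Matrix (Fin n) (Fin (p k)) ℝ :=
  Matrix.of fun i j => A i ⟨k, j⟩

def stackPinv {n K : ℕ} {p : Fin K → ℕ}
    (Ainv : ∀ k : Fin K, Matrix (Fin (p k)) (Fin n) ℝ) :
    Matrix (Σ k : Fin K, Fin (p k)) (Fin n) ℝ :=
  Matrix.of fun q j => Ainv q.1 q.2 j

/-- the CoCoA iterate with λ = 0 satisfies the closed-form recursion
`x̂^{t+1} = (I − (1/K) Ā A) x̂^t + (1/K) Ā y` with `Ā = [A₁⁺; …; A_K⁺]`. -/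
theorem closed_form_recursion {n K : ℕ} {p : Fin K → ℕ}
    (A : Matrix (Fin n) (Σ k : Fin K, Fin (p k)) ℝ)
    (Ainv : ∀ k : Fin K, Matrix (Fin (p k)) (Fin n) ℝ)
    (hAinv : ∀ k, IsMoorePenrose (colBlock A k) (Ainv k))
    (y : Fin n → ℝ)
    (xhat : ℕ → ((Σ k : Fin K, Fin (p k)) → ℝ))
    (vbar : ℕ → (Fin n → ℝ))
    (dx : ℕ → ∀ k : Fin K, Fin (p k) → ℝ)
    (v : ℕ → Fin K → (Fin n → ℝ))
    (hdx : ∀ t k, dx t k = ((1 : ℝ) / K) • (Ainv k).mulVec (y - vbar t))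
    (hxup : ∀ t (k : Fin K) (i : Fin (p k)),
      xhat (t + 1) ⟨k, i⟩ = xhat t ⟨k, i⟩ + dx t k i)
    (hvk : ∀ t k, v (t + 1) k = vbar t + (K : ℝ) • (colBlock A k).mulVec (dx t k))
    (hvbar : ∀ t, vbar (t + 1) = ((1 : ℝ) / K) • ∑ k, v (t + 1) k)
    (hx0 : xhat 0 = 0) (hv0 : vbar 0 = 0) :
    ∀ t, xhat (t + 1) =
      (1 - ((1 : ℝ) / K) • (stackPinv Ainv * A)).mulVec (xhat t)
        + ((1 : ℝ) / K) • (stackPinv Ainv).mulVec y := by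

  rcases Nat.eq_zero_or_pos K with hK | hK
  · subst hK
    intro t
    funext q
    exact q.1.elim0
  have hKne : (K : ℝ) ≠ 0 := Nat.cast_ne_zero.mpr hK.ne'
  have hinv : ∀ t, vbar t = A.mulVec (xhat t) := by
    intro t
    induction t with
    | zero => rw [hv0, hx0, Matrix.mulVec_zero]
    | succ t ih =>
      funext i
      have hsum : A.mulVec (xhat (t + 1)) i
          = A.mulVec (xhat t) i + ∑ k, (colBlock A k).mulVec (dx t k) i := by
        simp only [Matrix.mulVec, dotProduct, colBlock, Matrix.of_apply]
        rw [← Finset.univ_sigma_univ, Finset.sum_sigma, Finset.sum_sigma, ← Finset.sum_add_distrib]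
        refine Finset.sum_congr rfl fun k _ => ?_
        rw [← Finset.sum_add_distrib]
        refine Finset.sum_congr rfl fun j _ => ?_
        rw [hxup t k j]
        ring
      rw [hvbar, hsum]
      simp only [Pi.smul_apply, Finset.sum_apply, hvk, Pi.add_apply, smul_eq_mul,
        Finset.sum_add_distrib, Finset.sum_const, Finset.card_univ, Fintype.card_fin,
        nsmul_eq_mul, ← Finset.mul_sum, ← ih]
      field_simp
      simp only [Pi.mul_apply, Pi.natCast_apply]
      ring
  intro t
  funext q
  obtain ⟨k, i⟩ := q
  have hrow : ∀ w : Fin n → ℝ, (stackPinv Ainv).mulVec w ⟨k, i⟩ = (Ainv k).mulVec w i := by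
    intro w; rfl
  rw [hxup t k i, hdx t k, hinv t]
  simp only [Pi.add_apply, Pi.smul_apply, smul_eq_mul, Matrix.sub_mulVec,
    Matrix.one_mulVec, Matrix.smul_mulVec, ← Matrix.mulVec_mulVec,
    Pi.sub_apply, Matrix.mulVec_sub, hrow]
  ring
end

section
/- Let C be a random n×p_c matrix with i.i.d. rows distributed N(0, I_{p_c}). Then for any fixed z ∈ ℝ^{p_c}, zᵀ E[C⁺ C] z = ‖z‖² · min(n, p_c)/p_c. -/
open MeasureTheory ProbabilityTheory Matrix

noncomputable section AuxQF

def gam : Measure ℝ := gaussianReal 0 1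

instance : IsProbabilityMeasure gam := by unfold gam; infer_instance

lemma gauss_noAtoms : ∀ x : ℝ, gam {x} = 0 := fun x =>
  (gaussianReal_absolutelyContinuous 0 one_ne_zero) (measure_singleton x)

lemma hyperplane_null {pc : ℕ} (a : Fin pc → ℝ) (ha : a ≠ 0) :
    (Measure.pi fun _ : Fin pc => gam) {x | ∑ c, a c * x c = 0} = 0 := by
  obtain ⟨i, hi⟩ := Function.ne_iff.mp ha
  have hpc : pc ≠ 0 := by rintro rfl; exact i.elim0
  obtain ⟨m, rfl⟩ := Nat.exists_eq_succ_of_ne_zero hpc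
  have hmp := measurePreserving_piFinSuccAbove (fun _ : Fin (m+1) => gam) i
  set e := MeasurableEquiv.piFinSuccAbove (fun _ : Fin (m+1) => ℝ) i with he
  have hSmeas : MeasurableSet {x : Fin (m+1) → ℝ | ∑ c, a c * x c = 0} := by
    have : Measurable fun x : Fin (m+1) → ℝ => ∑ c, a c * x c :=
      Finset.measurable_sum _ fun c _ => (measurable_pi_apply c).const_mul _
    exact this (measurableSet_singleton 0)
  have key : (Measure.pi fun _ : Fin (m+1) => gam) {x | ∑ c, a c * x c = 0}
      = (gam.prod (Measure.pi fun _ : Fin m => gam))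
          (e.symm ⁻¹' {x | ∑ c, a c * x c = 0}) := by
    rw [← hmp.map_eq, MeasurableEquiv.map_apply]
    congr 1
    ext x
    simp
  rw [key, Measure.prod_apply_symm (e.symm.measurable hSmeas)]
  have hslice : ∀ y : Fin m → ℝ,
      gam ((fun t => (t, y)) ⁻¹' (e.symm ⁻¹' {x | ∑ c, a c * x c = 0})) = 0 := by
    intro y
    have hsub : ((fun t => (t, y)) ⁻¹' (e.symm ⁻¹' {x | ∑ c, a c * x c = 0}))
        ⊆ {(-(∑ j, a (i.succAbove j) * y j)) / a i} := by
      intro t ht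
      simp only [Set.mem_preimage, Set.mem_setOf_eq] at ht
      set v : Fin (m+1) → ℝ := i.insertNth t y with hv
      have hsymm : e.symm (t, y) = v := rfl
      rw [hsymm] at ht
      rw [Fin.sum_univ_succAbove (fun c => a c * v c) i] at ht
      rw [hv] at ht
      simp only [Fin.insertNth_apply_same, Fin.insertNth_apply_succAbove] at ht
      have : t = (-(∑ j, a (i.succAbove j) * y j)) / a i := by
        rw [eq_div_iff hi]
        linarith
      simpa [Set.mem_singleton_iff] using this
    exact measure_mono_null hsub (gauss_noAtoms _)
  simp only [hslice]
  simp

lemma subspace_null {pc : ℕ} (W : Submodule ℝ (Fin pc → ℝ)) (hW : W ≠ ⊤) :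
    (Measure.pi fun _ : Fin pc => gam) ↑W = 0 := by
  obtain ⟨f, hf0, hfW⟩ :=
    Submodule.exists_dual_map_eq_bot_of_lt_top (lt_top_iff_ne_top.2 hW) inferInstance
  set a : Fin pc → ℝ := fun c => f (fun j => if c = j then 1 else 0) with ha
  have hfx : ∀ x : Fin pc → ℝ, f x = ∑ c, a c * x c := by
    intro x
    rw [LinearMap.pi_apply_eq_sum_univ f x]
    exact Finset.sum_congr rfl fun c _ => by rw [smul_eq_mul, mul_comm]
  have hane : a ≠ 0 := by
    intro h0
    apply hf0
    refine LinearMap.ext fun x => ?_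
    have hz : ∀ c, a c = 0 := fun c => congrFun h0 c
    show f x = 0
    rw [hfx x]
    simp [hz]
  refine measure_mono_null ?_ (hyperplane_null a hane)
  intro x hx
  have hfx0 : f x = 0 := by
    have : f x ∈ Submodule.map f W := Submodule.mem_map_of_mem hx
    rw [hfW] at this
    simpa using this
  simp only [Set.mem_setOf_eq, ← hfx x, hfx0]


section Part2
open MeasureTheory ProbabilityTheory Matrix

lemma tmulVec_eq {k pc : ℕ} (x : Fin k → Fin pc → ℝ) (g : Fin k → ℝ) :
    (Matrix.of x)ᵀ.mulVec g = ∑ r, g r • x r := by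
  ext c
  simp [Matrix.mulVec, dotProduct, Finset.sum_apply, mul_comm]

lemma gram_det_ne_zero_iff {k pc : ℕ} (x : Fin k → Fin pc → ℝ) :
    (Matrix.of x * (Matrix.of x)ᵀ).det ≠ 0 ↔ LinearIndependent ℝ x := by
  constructor
  · intro h
    have hinj : Function.Injective (Matrix.of x * (Matrix.of x)ᵀ).mulVec :=
      Matrix.mulVec_injective_iff_isUnit.2 (Matrix.isUnit_iff_isUnit_det _ |>.2
        (isUnit_iff_ne_zero.2 h))
    rw [Fintype.linearIndependent_iff]
    intro g hg r
    have h0 : (Matrix.of x * (Matrix.of x)ᵀ).mulVec g = (Matrix.of x * (Matrix.of x)ᵀ).mulVec 0 := by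
      rw [← Matrix.mulVec_mulVec, tmulVec_eq, hg]
      simp
    have := hinj h0
    rw [this] at *
    rfl
  · intro hli
    have hker : ∀ v, (Matrix.of x * (Matrix.of x)ᵀ).mulVec v = 0 → v = 0 := by
      intro v hv
      have hw : (Matrix.of x)ᵀ.mulVec v = 0 := by
        have hdot : (Matrix.of x)ᵀ.mulVec v ⬝ᵥ (Matrix.of x)ᵀ.mulVec v = 0 := by
          have h1 : v ⬝ᵥ (Matrix.of x * (Matrix.of x)ᵀ).mulVec v = 0 := by rw [hv]; simp
          rwa [← Matrix.mulVec_mulVec, Matrix.dotProduct_mulVec, ← Matrix.mulVec_transpose] at h1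
        exact dotProduct_self_eq_zero.mp hdot
      rw [tmulVec_eq] at hw
      exact funext (Fintype.linearIndependent_iff.mp hli v hw)
    have hinj : Function.Injective (Matrix.of x * (Matrix.of x)ᵀ).mulVec := by
      intro u w huw
      have hsub : (Matrix.of x * (Matrix.of x)ᵀ).mulVec (u - w) = 0 := by
        rw [Matrix.mulVec_sub, huw, sub_self]
      have := hker _ hsub
      rwa [sub_eq_zero] at this
    exact fun h0 => by
      have := Matrix.mulVec_injective_iff_isUnit.1 hinj
      rw [Matrix.isUnit_iff_isUnit_det] at this
      exact (isUnit_iff_ne_zero.1 this) h0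

lemma gram_measurable {k pc : ℕ} :
    Measurable fun x : Fin k → Fin pc → ℝ => (Matrix.of x * (Matrix.of x)ᵀ).det := by
  have hc : Continuous fun x : Fin k → Fin pc → ℝ => (Matrix.of x * (Matrix.of x)ᵀ).det := by
    have h1 : Continuous fun x : Fin k → Fin pc → ℝ => Matrix.of x := continuous_id
    exact (h1.matrix_mul h1.matrix_transpose).matrix_det
  exact hc.measurable

lemma colgram_measurable {k pc : ℕ} :
    Measurable fun x : Fin k → Fin pc → ℝ => ((Matrix.of x)ᵀ * Matrix.of x).det := by
  have hc : Continuous fun x : Fin k → Fin pc → ℝ => ((Matrix.of x)ᵀ * Matrix.of x).det := by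
    have h1 : Continuous fun x : Fin k → Fin pc → ℝ => Matrix.of x := continuous_id
    exact (h1.matrix_transpose.matrix_mul h1).matrix_det
  exact hc.measurable

lemma rows_li_null {pc : ℕ} : ∀ {k : ℕ}, k ≤ pc →
    (Measure.pi fun _ : Fin k => Measure.pi fun _ : Fin pc => gam)
      {x | (Matrix.of x * (Matrix.of x)ᵀ).det = 0} = 0 := by
  intro k
  induction k with
  | zero =>
    intro _
    have : {x : Fin 0 → Fin pc → ℝ | (Matrix.of x * (Matrix.of x)ᵀ).det = 0} = ∅ := by
      ext x
      simp [Matrix.det_isEmpty]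
    rw [this]
    simp
  | succ k ih =>
    intro hk
    have hkpc : k ≤ pc := Nat.le_of_succ_le hk
    set π := Measure.pi fun _ : Fin pc => gam with hπdef
    have hmp := measurePreserving_piFinSuccAbove (fun _ : Fin (k+1) => π) 0
    set e := MeasurableEquiv.piFinSuccAbove (fun _ : Fin (k+1) => (Fin pc → ℝ)) 0 with he
    set S := {x : Fin (k+1) → Fin pc → ℝ | (Matrix.of x * (Matrix.of x)ᵀ).det = 0} with hS
    have hSmeas : MeasurableSet S := gram_measurable (measurableSet_singleton 0)
    have key : (Measure.pi fun _ : Fin (k+1) => π) S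
        = (π.prod (Measure.pi fun _ : Fin k => π)) (e.symm ⁻¹' S) := by
      rw [← hmp.map_eq, MeasurableEquiv.map_apply]
      congr 1
      ext x
      simp
    rw [key, Measure.prod_apply_symm (e.symm.measurable hSmeas)]
    have hae : ∀ᵐ y ∂(Measure.pi fun _ : Fin k => π),
        (Matrix.of y * (Matrix.of y)ᵀ).det ≠ 0 := by
      rw [ae_iff]
      simpa using ih hkpc
    have hzero : ∀ᵐ y ∂(Measure.pi fun _ : Fin k => π),
        π ((fun t => (t, y)) ⁻¹' (e.symm ⁻¹' S)) = 0 := by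
      filter_upwards [hae] with y hy
      have hliy : LinearIndependent ℝ y := (gram_det_ne_zero_iff y).mp hy
      have hsub : ((fun t => (t, y)) ⁻¹' (e.symm ⁻¹' S))
          ⊆ ↑(Submodule.span ℝ (Set.range y)) := by
        intro t ht
        simp only [Set.mem_preimage] at ht
        have hsymm : e.symm (t, y) = (0 : Fin (k+1)).insertNth t y := rfl
        rw [hsymm] at ht
        have hins : (0 : Fin (k+1)).insertNth t y = (Fin.cons t y : Fin (k+1) → Fin pc → ℝ) := by
          funext c
          refine Fin.cases ?_ (fun j => ?_) c
          · simp
          · rw [show Fin.succ j = (0 : Fin (k+1)).succAbove j by simp [Fin.succAbove_zero]]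
            rw [Fin.insertNth_apply_succAbove]
            simp
        rw [hins] at ht
        have hnli : ¬ LinearIndependent ℝ (Fin.cons t y : Fin (k+1) → Fin pc → ℝ) := by
          rw [← gram_det_ne_zero_iff, not_not]
          exact ht
        rw [linearIndependent_fin_cons] at hnli
        push_neg at hnli
        exact hnli hliy
      have hWne : Submodule.span ℝ (Set.range y) ≠ ⊤ := by
        intro htop
        have h1 : Module.finrank ℝ (Fin pc → ℝ) ≤ Fintype.card (Fin k) :=
          finrank_le_of_span_eq_top htop
        simp only [Module.finrank_pi, Fintype.card_fin, Module.finrank_self] at h1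
        omega
      exact measure_mono_null hsub (subspace_null _ hWne)
    rw [lintegral_congr_ae hzero]
    simp

end Part2

section Part3
open MeasureTheory ProbabilityTheory Matrix

lemma cols_det_ne_zero_iff {k pc : ℕ} (x : Fin k → Fin pc → ℝ) :
    ((Matrix.of x)ᵀ * Matrix.of x).det ≠ 0
      ↔ LinearIndependent ℝ (fun c r => x r c : Fin pc → Fin k → ℝ) := by
  have h1 : Matrix.of (fun c r => x r c : Fin pc → Fin k → ℝ) = (Matrix.of x)ᵀ := by
    ext c r; rfl
  have := gram_det_ne_zero_iff (fun c r => x r c : Fin pc → Fin k → ℝ)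
  rw [h1, Matrix.transpose_transpose] at this
  exact this

lemma cols_li_null {pc : ℕ} : ∀ k : ℕ, pc ≤ k →
    (Measure.pi fun _ : Fin k => Measure.pi fun _ : Fin pc => gam)
      {x | ((Matrix.of x)ᵀ * Matrix.of x).det = 0} = 0 := by
  refine Nat.le_induction ?_ ?_
  · -- base case k = pc : square matrix
    have hset : {x : Fin pc → Fin pc → ℝ | ((Matrix.of x)ᵀ * Matrix.of x).det = 0}
        = {x | (Matrix.of x * (Matrix.of x)ᵀ).det = 0} := by
      ext x
      simp only [Set.mem_setOf_eq, Matrix.det_mul, Matrix.det_transpose]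
    rw [hset]
    exact rows_li_null le_rfl
  · intro k hpk ih
    set π := Measure.pi fun _ : Fin pc => gam with hπdef
    set S : Set (Fin k → Fin pc → ℝ) := {x | ((Matrix.of x)ᵀ * Matrix.of x).det = 0} with hSdef
    have hSmeas : MeasurableSet S := colgram_measurable (measurableSet_singleton 0)
    set T : Set (Fin (k+1) → Fin pc → ℝ) := {x | ((Matrix.of x)ᵀ * Matrix.of x).det = 0} with hTdef
    -- T ⊆ tail ⁻¹' S
    have hsub : T ⊆ (fun x : Fin (k+1) → Fin pc → ℝ => x ∘ Fin.succ) ⁻¹' S := by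
      intro x hx
      simp only [Set.mem_preimage, hSdef, Set.mem_setOf_eq]
      by_contra hy
      -- columns of tail are linearly independent, hence columns of x are, hence det ≠ 0
      have hliy := (cols_det_ne_zero_iff (x ∘ Fin.succ)).mp hy
      have hlix : LinearIndependent ℝ (fun c r => x r c : Fin pc → Fin (k+1) → ℝ) := by
        rw [Fintype.linearIndependent_iff] at hliy ⊢
        intro g hg c
        refine hliy g ?_ c
        funext r
        have := congrFun hg (Fin.succ r)
        simpa [Finset.sum_apply] using this
      have := (cols_det_ne_zero_iff x).mpr hlix
      exact this hx
    have hmeas_tail : Measurable fun x : Fin (k+1) → Fin pc → ℝ => x ∘ Fin.succ :=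
      measurable_pi_lambda _ fun r => measurable_pi_apply _
    refine measure_mono_null hsub ?_
    have hmap : (Measure.pi fun _ : Fin (k+1) => π).map
          (fun x : Fin (k+1) → Fin pc → ℝ => x ∘ Fin.succ)
        = Measure.pi fun _ : Fin k => π := by
      have hmp := measurePreserving_piFinSuccAbove (fun _ : Fin (k+1) => π) 0
      set e := MeasurableEquiv.piFinSuccAbove (fun _ : Fin (k+1) => (Fin pc → ℝ)) 0 with he
      have hcomp : (fun x : Fin (k+1) → Fin pc → ℝ => x ∘ Fin.succ)
          = Prod.snd ∘ e := by
        funext x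
        funext r
        show x (Fin.succ r) = x ((0 : Fin (k+1)).succAbove r)
        congr 1
      rw [hcomp, ← Measure.map_map measurable_snd e.measurable, hmp.map_eq,
        Measure.map_snd_prod]
      simp
    calc (Measure.pi fun _ : Fin (k+1) => π)
          ((fun x : Fin (k+1) → Fin pc → ℝ => x ∘ Fin.succ) ⁻¹' S)
        = ((Measure.pi fun _ : Fin (k+1) => π).map
            (fun x : Fin (k+1) → Fin pc → ℝ => x ∘ Fin.succ)) S := by
          rw [Measure.map_apply hmeas_tail hSmeas]
      _ = 0 := by rw [hmap]; exact ih

end Part3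


section Part4
open MeasureTheory ProbabilityTheory Matrix

lemma isMoorePenrose_unique {m n : Type*} [Fintype m] [Fintype n] [DecidableEq m] [DecidableEq n]
    {M : Matrix m n ℝ} {B₁ B₂ : Matrix n m ℝ}
    (h₁ : IsMoorePenrose M B₁) (h₂ : IsMoorePenrose M B₂) : B₁ = B₂ := by
  obtain ⟨hA1, hB1, hS1, hT1⟩ := h₁
  obtain ⟨hA2, hB2, hS2, hT2⟩ := h₂
  have hMt2 : Mᵀ = Mᵀ * (M * B₂) := by
    conv_lhs => rw [← hA2]
    rw [Matrix.transpose_mul, hS2]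
  have step1 : M * B₁ = M * B₂ := by
    calc M * B₁ = (M * B₁)ᵀ := hS1.symm
      _ = B₁ᵀ * Mᵀ := Matrix.transpose_mul _ _
      _ = B₁ᵀ * (Mᵀ * (M * B₂)) := by rw [← hMt2]
      _ = (B₁ᵀ * Mᵀ) * (M * B₂) := by rw [Matrix.mul_assoc]
      _ = (M * B₁)ᵀ * (M * B₂) := by rw [Matrix.transpose_mul]
      _ = (M * B₁) * (M * B₂) := by rw [hS1]
      _ = (M * B₁ * M) * B₂ := by simp only [Matrix.mul_assoc]
      _ = M * B₂ := by rw [hA1]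
  have hMt2' : Mᵀ = (B₂ * M) * Mᵀ := by
    conv_lhs => rw [← hA2]
    rw [Matrix.mul_assoc, Matrix.transpose_mul, hT2]
  have step2 : B₁ * M = B₂ * M := by
    calc B₁ * M = (B₁ * M)ᵀ := hT1.symm
      _ = Mᵀ * B₁ᵀ := Matrix.transpose_mul _ _
      _ = ((B₂ * M) * Mᵀ) * B₁ᵀ := by rw [← hMt2']
      _ = (B₂ * M) * (Mᵀ * B₁ᵀ) := by rw [Matrix.mul_assoc]
      _ = (B₂ * M) * (B₁ * M)ᵀ := by rw [Matrix.transpose_mul]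
      _ = (B₂ * M) * (B₁ * M) := by rw [hT1]
      _ = B₂ * (M * B₁ * M) := by simp only [Matrix.mul_assoc]
      _ = B₂ * M := by rw [hA1]
  calc B₁ = B₁ * M * B₁ := hB1.symm
    _ = B₂ * M * B₁ := by rw [step2]
    _ = B₂ * (M * B₁) := by rw [Matrix.mul_assoc]
    _ = B₂ * (M * B₂) := by rw [step1]
    _ = B₂ * M * B₂ := by rw [← Matrix.mul_assoc]
    _ = B₂ := hB2

lemma isMoorePenrose_explicit {n pc : ℕ} (A : Matrix (Fin n) (Fin pc) ℝ)
    (h : IsUnit (A * Aᵀ).det) :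
    IsMoorePenrose A (Aᵀ * (A * Aᵀ)⁻¹) := by
  have hAB : A * (Aᵀ * (A * Aᵀ)⁻¹) = 1 := by
    rw [← Matrix.mul_assoc, Matrix.mul_nonsing_inv _ h]
  have hSinvT : ((A * Aᵀ)⁻¹)ᵀ = (A * Aᵀ)⁻¹ := by
    rw [Matrix.transpose_nonsing_inv, Matrix.transpose_mul, Matrix.transpose_transpose]
  refine ⟨?_, ?_, ?_, ?_⟩
  · rw [hAB, Matrix.one_mul]
  · conv_lhs => rw [Matrix.mul_assoc, hAB]
    rw [Matrix.mul_one]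
  · rw [hAB]
    simp
  · rw [Matrix.transpose_mul, Matrix.transpose_mul, Matrix.transpose_transpose, hSinvT,
      Matrix.mul_assoc]

/-- the projection matrix onto the row space -/
def gmat {n pc : ℕ} (A : Matrix (Fin n) (Fin pc) ℝ) : Matrix (Fin pc) (Fin pc) ℝ :=
  Aᵀ * (A * Aᵀ)⁻¹ * A

lemma gmat_transpose {n pc : ℕ} (A : Matrix (Fin n) (Fin pc) ℝ) (h : IsUnit (A * Aᵀ).det) :
    (gmat A)ᵀ = gmat A := by
  have hSinvT : ((A * Aᵀ)⁻¹)ᵀ = (A * Aᵀ)⁻¹ := by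
    rw [Matrix.transpose_nonsing_inv, Matrix.transpose_mul, Matrix.transpose_transpose]
  unfold gmat
  rw [Matrix.transpose_mul, Matrix.transpose_mul, Matrix.transpose_transpose, hSinvT,
    Matrix.mul_assoc]

lemma gmat_idem {n pc : ℕ} (A : Matrix (Fin n) (Fin pc) ℝ) (h : IsUnit (A * Aᵀ).det) :
    gmat A * gmat A = gmat A := by
  unfold gmat
  calc Aᵀ * (A * Aᵀ)⁻¹ * A * (Aᵀ * (A * Aᵀ)⁻¹ * A)
      = Aᵀ * (A * Aᵀ)⁻¹ * ((A * Aᵀ) * ((A * Aᵀ)⁻¹ * A)) := by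
        simp only [Matrix.mul_assoc]
    _ = Aᵀ * (A * Aᵀ)⁻¹ * A := by
        rw [← Matrix.mul_assoc (A * Aᵀ), Matrix.mul_nonsing_inv _ h, Matrix.one_mul]

lemma gmat_entry_bound {n pc : ℕ} (A : Matrix (Fin n) (Fin pc) ℝ) (h : IsUnit (A * Aᵀ).det)
    (i j : Fin pc) : |gmat A i j| ≤ 1 := by
  have hPt : ∀ a b, gmat A b a = gmat A a b := fun a b => by
    simpa using congrFun (congrFun (gmat_transpose A h) a) b
  have hdiag : ∀ a, gmat A a a = ∑ k, (gmat A a k)^2 := by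
    intro a
    have h2 := congrFun (congrFun (gmat_idem A h) a) a
    rw [Matrix.mul_apply] at h2
    rw [← h2]
    exact Finset.sum_congr rfl fun k _ => by rw [hPt k a]; ring
  have hdiag_nonneg : ∀ a, 0 ≤ gmat A a a := fun a => by
    rw [hdiag]; positivity
  have hdiag_le_one : ∀ a, gmat A a a ≤ 1 := by
    intro a
    have h1 : (gmat A a a)^2 ≤ ∑ k, (gmat A a k)^2 :=
      Finset.single_le_sum (f := fun k => (gmat A a k)^2) (fun k _ => sq_nonneg _)
        (Finset.mem_univ a)
    rw [← hdiag] at h1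
    nlinarith [hdiag_nonneg a]
  have hsq : (gmat A i j)^2 ≤ 1 := by
    have h1 : (gmat A i j)^2 ≤ ∑ k, (gmat A i k)^2 :=
      Finset.single_le_sum (f := fun k => (gmat A i k)^2) (fun k _ => sq_nonneg _)
        (Finset.mem_univ j)
    rw [← hdiag] at h1
    exact le_trans h1 (hdiag_le_one i)
  nlinarith [abs_nonneg (gmat A i j), sq_abs (gmat A i j)]

lemma gmat_mul_orth {n pc : ℕ} (A : Matrix (Fin n) (Fin pc) ℝ)
    (Q : Matrix (Fin pc) (Fin pc) ℝ) (hQ : Q * Qᵀ = 1) :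
    gmat (A * Q) = Qᵀ * gmat A * Q := by
  have hS : (A * Q) * (A * Q)ᵀ = A * Aᵀ := by
    rw [Matrix.transpose_mul]
    calc A * Q * (Qᵀ * Aᵀ) = A * (Q * Qᵀ) * Aᵀ := by simp only [Matrix.mul_assoc]
      _ = A * Aᵀ := by rw [hQ, Matrix.mul_one]
  unfold gmat
  rw [hS, Matrix.transpose_mul]
  simp only [Matrix.mul_assoc]

lemma gmat_trace {n pc : ℕ} (A : Matrix (Fin n) (Fin pc) ℝ) (h : IsUnit (A * Aᵀ).det) :
    ∑ i, gmat A i i = n := by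
  have h0 : ∑ i, gmat A i i = (gmat A).trace := rfl
  rw [h0]
  unfold gmat
  rw [Matrix.trace_mul_comm, ← Matrix.mul_assoc, Matrix.mul_nonsing_inv _ h, Matrix.trace_one]
  simp

end Part4


section Part5
open MeasureTheory ProbabilityTheory Matrix

def piGauss (n pc : ℕ) : Measure (Fin n → Fin pc → ℝ) :=
  Measure.pi fun _ : Fin n => Measure.pi fun _ : Fin pc => gam

instance {n pc : ℕ} : IsProbabilityMeasure (piGauss n pc) := by
  unfold piGauss; infer_instance

lemma gmat_measurable {n pc : ℕ} (i j : Fin pc) :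
    Measurable fun x : Fin n → Fin pc → ℝ => gmat (Matrix.of x) i j := by
  have hdet : Measurable fun x : Fin n → Fin pc → ℝ => (Matrix.of x * (Matrix.of x)ᵀ).det :=
    gram_measurable
  have hadj : ∀ (k l : Fin n),
      Measurable fun x : Fin n → Fin pc → ℝ => (Matrix.of x * (Matrix.of x)ᵀ).adjugate k l := by
    intro k l
    have hc : Continuous fun x : Fin n → Fin pc → ℝ => (Matrix.of x * (Matrix.of x)ᵀ).adjugate := by
      have h1 : Continuous fun x : Fin n → Fin pc → ℝ => Matrix.of x := continuous_id
      exact (h1.matrix_mul h1.matrix_transpose).matrix_adjugate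
    exact ((continuous_apply l).comp ((continuous_apply k).comp hc)).measurable
  have hinv : ∀ (k l : Fin n),
      Measurable fun x : Fin n → Fin pc → ℝ => (Matrix.of x * (Matrix.of x)ᵀ)⁻¹ k l := by
    intro k l
    have heq : (fun x : Fin n → Fin pc → ℝ => (Matrix.of x * (Matrix.of x)ᵀ)⁻¹ k l)
        = fun x => (Ring.inverse ((Matrix.of x * (Matrix.of x)ᵀ).det))
            * (Matrix.of x * (Matrix.of x)ᵀ).adjugate k l := by
      funext x
      rw [Matrix.inv_def, Matrix.smul_apply, smul_eq_mul]
    rw [heq]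
    simp only [Ring.inverse_eq_inv']
    exact (hdet.inv).mul (hadj k l)
  have hentry : ∀ (k : Fin n) (c : Fin pc), Measurable fun x : Fin n → Fin pc → ℝ => x k c :=
    fun k c => (measurable_pi_apply c).comp (measurable_pi_apply k)
  have heq : (fun x : Fin n → Fin pc → ℝ => gmat (Matrix.of x) i j)
      = fun x => ∑ l, (∑ k, x k i * (Matrix.of x * (Matrix.of x)ᵀ)⁻¹ k l) * x l j := by
    funext x
    simp [gmat, Matrix.mul_apply]
  rw [heq]
  exact Finset.measurable_sum _ fun l _ =>
    ((Finset.measurable_sum _ fun k _ => (hentry k i).mul (hinv k l)).mul (hentry l j))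

lemma gmat_comp_integral_eq {n pc : ℕ} {T : (Fin n → Fin pc → ℝ) → (Fin n → Fin pc → ℝ)}
    (hT : MeasurePreserving T (piGauss n pc) (piGauss n pc)) (i j : Fin pc) :
    ∫ x, gmat (Matrix.of x) i j ∂(piGauss n pc)
      = ∫ x, gmat (Matrix.of (T x)) i j ∂(piGauss n pc) := by
  have h1 := integral_map (μ := piGauss n pc) hT.measurable.aemeasurable
    (f := fun x => gmat (Matrix.of x) i j) (by
      rw [hT.map_eq]; exact (gmat_measurable i j).aestronglyMeasurable)
  rw [hT.map_eq] at h1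
  simpa using h1

lemma mp_scale_gam (c : ℝ) (hc : c = 1 ∨ c = -1) :
    MeasurePreserving (fun t : ℝ => t * c) gam gam := by
  refine ⟨measurable_id.mul_const _, ?_⟩
  rcases hc with rfl | rfl
  · simp
  · have h := gaussianReal_map_mul_const (μ := 0) (v := 1) (-1 : ℝ)
    have h2 : (⟨(-1 : ℝ)^2, sq_nonneg _⟩ : NNReal) * 1 = 1 := by
      ext; norm_num
    rw [mul_zero] at h
    unfold gam
    convert h using 2
    ext; norm_num

lemma mp_flip {n pc : ℕ} (d : Fin pc → ℝ) (hd : ∀ c, d c = 1 ∨ d c = -1) :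
    MeasurePreserving (fun a : Fin n → Fin pc → ℝ => fun r c => a r c * d c)
      (piGauss n pc) (piGauss n pc) := by
  have hrow : MeasurePreserving (fun v : Fin pc → ℝ => fun c => v c * d c)
      (Measure.pi fun _ : Fin pc => gam) (Measure.pi fun _ : Fin pc => gam) :=
    measurePreserving_pi _ _ fun c => mp_scale_gam (d c) (hd c)
  exact measurePreserving_pi _ _ fun _ => hrow

lemma mp_perm {n pc : ℕ} (σ : Equiv.Perm (Fin pc)) :
    MeasurePreserving (fun a : Fin n → Fin pc → ℝ => fun r c => a r (σ c))
      (piGauss n pc) (piGauss n pc) := by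
  have h := measurePreserving_piCongrLeft (fun _ : Fin pc => gam) σ.symm
  have hfun : ⇑(MeasurableEquiv.piCongrLeft (fun _ : Fin pc => ℝ) σ.symm)
      = fun (v : Fin pc → ℝ) c => v (σ c) := by
    funext v c
    have h3 := @MeasurableEquiv.piCongrLeft_apply_apply (Fin pc) (Fin pc) σ.symm
      (fun _ => ℝ) (fun _ => inferInstance) v (σ c)
    simpa using h3
  rw [hfun] at h
  have hrow : MeasurePreserving (fun v : Fin pc → ℝ => fun c => v (σ c))
      (Measure.pi fun _ : Fin pc => gam) (Measure.pi fun _ : Fin pc => gam) := h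
  exact measurePreserving_pi _ _ fun _ => hrow

end Part5


section Part6
open MeasureTheory ProbabilityTheory Matrix

lemma integral_gmat_offdiag {n pc : ℕ} {i j : Fin pc} (hij : i ≠ j) :
    ∫ x, gmat (Matrix.of x) i j ∂(piGauss n pc) = 0 := by
  classical
  set d : Fin pc → ℝ := fun c => if c = i then -1 else 1 with hd
  have hdpm : ∀ c, d c = 1 ∨ d c = -1 := by
    intro c; by_cases hc : c = i <;> simp [hd, hc]
  have hT := mp_flip (n := n) d hdpm
  have hQ : Matrix.diagonal d * (Matrix.diagonal d)ᵀ = 1 := by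
    rw [Matrix.diagonal_transpose, Matrix.diagonal_mul_diagonal]
    have : (fun c => d c * d c) = fun _ => (1:ℝ) := by
      funext c
      rcases hdpm c with h | h <;> rw [h] <;> norm_num
    rw [this, Matrix.diagonal_one]
  have hof : ∀ a : Fin n → Fin pc → ℝ,
      Matrix.of (fun r c => a r c * d c) = Matrix.of a * Matrix.diagonal d := by
    intro a
    ext r c
    rw [Matrix.mul_diagonal]
    rfl
  have key := gmat_comp_integral_eq hT i j
  have hval : ∀ a : Fin n → Fin pc → ℝ,
      gmat (Matrix.of (fun r c => a r c * d c)) i j = - gmat (Matrix.of a) i j := by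
    intro a
    rw [hof a, gmat_mul_orth _ _ hQ, Matrix.diagonal_transpose]
    rw [Matrix.mul_diagonal, Matrix.diagonal_mul]
    have hdi : d i = -1 := by simp [hd]
    have hdj : d j = 1 := by simp [hd, (Ne.symm hij)]
    rw [hdi, hdj]
    ring
  rw [show (∫ x, gmat (Matrix.of ((fun a : Fin n → Fin pc → ℝ =>
      fun r c => a r c * d c) x)) i j ∂(piGauss n pc))
      = ∫ x, - gmat (Matrix.of x) i j ∂(piGauss n pc) from by
        exact integral_congr_ae (Filter.Eventually.of_forall fun x => hval x)] at key
  rw [integral_neg] at key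
  linarith

lemma integral_gmat_diag_eq {n pc : ℕ} (i j : Fin pc) :
    ∫ x, gmat (Matrix.of x) j j ∂(piGauss n pc)
      = ∫ x, gmat (Matrix.of x) i i ∂(piGauss n pc) := by
  classical
  set σ : Equiv.Perm (Fin pc) := Equiv.swap i j with hσ
  set Q : Matrix (Fin pc) (Fin pc) ℝ := Matrix.of fun k c => if σ k = c then (1:ℝ) else 0 with hQdef
  have hQ : Q * Qᵀ = 1 := by
    ext a b
    rw [Matrix.mul_apply, Matrix.one_apply]
    simp only [hQdef, Matrix.transpose_apply, Matrix.of_apply, ite_mul, one_mul, zero_mul]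
    rw [Finset.sum_ite_eq _ (σ a) (fun c => if σ b = c then (1:ℝ) else 0)]
    simp only [Finset.mem_univ, if_true]
    by_cases hab : a = b
    · simp [hab]
    · have : σ b ≠ σ a := fun hc => hab (σ.injective hc).symm
      simp [this, hab]
  have hof : ∀ a : Fin n → Fin pc → ℝ,
      Matrix.of (fun r c => a r (σ c)) = Matrix.of a * Q := by
    intro a
    ext r c
    rw [Matrix.mul_apply]
    simp only [hQdef, Matrix.of_apply, mul_ite, mul_one, mul_zero]
    have hcond : ∀ k : Fin pc, (σ k = c) = (k = σ.symm c) := by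
      intro k
      simp [Equiv.apply_eq_iff_eq_symm_apply]
    simp_rw [hcond]
    rw [Finset.sum_ite_eq' _ (σ.symm c) (fun k => a r k)]
    simp only [Finset.mem_univ, if_true]
    rw [hσ, Equiv.symm_swap]
  have hconj : ∀ (X : Matrix (Fin pc) (Fin pc) ℝ) (a b : Fin pc),
      (Qᵀ * X * Q) a b = X (σ a) (σ b) := by
    intro X a b
    rw [Matrix.mul_apply]
    have hcol : ∀ c, (Qᵀ * X) a c = X (σ a) c := by
      intro c
      rw [Matrix.mul_apply]
      simp only [hQdef, Matrix.transpose_apply, Matrix.of_apply, ite_mul, one_mul, zero_mul]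
      have hcond : ∀ k : Fin pc, (σ k = a) = (k = σ.symm a) := by
        intro k; simp [Equiv.apply_eq_iff_eq_symm_apply]
      simp_rw [hcond]
      rw [Finset.sum_ite_eq' _ (σ.symm a) (fun k => X k c)]
      simp only [Finset.mem_univ, if_true]
      rw [hσ, Equiv.symm_swap]
    simp_rw [hcol]
    simp only [hQdef, Matrix.of_apply, mul_ite, mul_one, mul_zero]
    have hcond : ∀ c : Fin pc, (σ c = b) = (c = σ.symm b) := by
      intro c; simp [Equiv.apply_eq_iff_eq_symm_apply]
    simp_rw [hcond]
    rw [Finset.sum_ite_eq' _ (σ.symm b) (fun c => X (σ a) c)]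
    simp only [Finset.mem_univ, if_true]
    rw [hσ, Equiv.symm_swap]
  have hT := mp_perm (n := n) σ
  have key := gmat_comp_integral_eq hT j j
  have hval : ∀ a : Fin n → Fin pc → ℝ,
      gmat (Matrix.of (fun r c => a r (σ c))) j j = gmat (Matrix.of a) i i := by
    intro a
    rw [hof a, gmat_mul_orth _ _ hQ, hconj]
    rw [hσ]
    rw [Equiv.swap_apply_right]
  rw [key]
  exact integral_congr_ae (Filter.Eventually.of_forall fun x => hval x)

end Part6

end AuxQF

/-- for a random n×p_c matrix `C` with i.i.d. standard Gaussian
entries, `zᵀ E[C⁺C] z = ‖z‖² · min(n, p_c)/p_c` for any fixed `z`. -/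
theorem quadform_expected_pinv_mul_self {n pc : ℕ}
    {Ω : Type*} [MeasurableSpace Ω] (μ : Measure Ω) [IsProbabilityMeasure μ]
    (C : Ω → Fin n → Fin pc → ℝ) (hmeasC : Measurable C)
    (hiid : Measure.map C μ =
      (Measure.pi fun _ : Fin n => Measure.pi fun _ : Fin pc => gaussianReal 0 1))
    (Cinv : Ω → Fin pc → Fin n → ℝ)
    (hmeasCinv : Measurable Cinv)
    (hCinv : ∀ᵐ ω ∂μ, IsMoorePenrose (Matrix.of (C ω)) (Matrix.of (Cinv ω)))
    (z : Fin pc → ℝ) :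
    z ⬝ᵥ (Matrix.of fun i j : Fin pc =>
        ∫ ω, (Matrix.of (Cinv ω) * Matrix.of (C ω)) i j ∂μ).mulVec z
      = (∑ i, z i ^ 2) * (min n pc : ℝ) / pc := by
  classical
  have hiid' : Measure.map C μ = piGauss n pc := hiid
  rcases Nat.lt_or_ge n pc with hlt | hge
  · -- case n < pc
    have hpcpos : 0 < pc := lt_of_le_of_lt (Nat.zero_le n) hlt
    have hνdet : (piGauss n pc) {x | (Matrix.of x * (Matrix.of x)ᵀ).det = 0} = 0 :=
      rows_li_null (le_of_lt hlt)
    have hSm : MeasurableSet {x : Fin n → Fin pc → ℝ | (Matrix.of x * (Matrix.of x)ᵀ).det = 0} :=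
      gram_measurable (measurableSet_singleton 0)
    have hμdet : μ {ω | (Matrix.of (C ω) * (Matrix.of (C ω))ᵀ).det = 0} = 0 := by
      have : {ω | (Matrix.of (C ω) * (Matrix.of (C ω))ᵀ).det = 0}
          = C ⁻¹' {x | (Matrix.of x * (Matrix.of x)ᵀ).det = 0} := rfl
      rw [this, ← Measure.map_apply hmeasC hSm, hiid']
      exact hνdet
    have hdet_ae : ∀ᵐ ω ∂μ, (Matrix.of (C ω) * (Matrix.of (C ω))ᵀ).det ≠ 0 := by
      rw [ae_iff]
      simpa only [not_not] using hμdet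
    have hνdet_ae : ∀ᵐ x ∂(piGauss n pc), (Matrix.of x * (Matrix.of x)ᵀ).det ≠ 0 := by
      rw [ae_iff]
      simpa only [not_not] using hνdet
    have hPg_ae : ∀ᵐ ω ∂μ,
        Matrix.of (Cinv ω) * Matrix.of (C ω) = gmat (Matrix.of (C ω)) := by
      filter_upwards [hCinv, hdet_ae] with ω hmp hdet
      have hunit : IsUnit (Matrix.of (C ω) * (Matrix.of (C ω))ᵀ).det :=
        isUnit_iff_ne_zero.2 hdet
      have hexp := isMoorePenrose_explicit (Matrix.of (C ω)) hunit
      have heq := isMoorePenrose_unique hmp hexp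
      rw [heq]
      rfl
    have hMentry : ∀ i j : Fin pc, (∫ ω, (Matrix.of (Cinv ω) * Matrix.of (C ω)) i j ∂μ)
        = ∫ x, gmat (Matrix.of x) i j ∂(piGauss n pc) := by
      intro i j
      have h1 : ∫ ω, (Matrix.of (Cinv ω) * Matrix.of (C ω)) i j ∂μ
          = ∫ ω, gmat (Matrix.of (C ω)) i j ∂μ :=
        integral_congr_ae (hPg_ae.mono fun ω h => by simp only [h])
      have h2 := integral_map (μ := μ) hmeasC.aemeasurable
        (f := fun x => gmat (Matrix.of x) i j)
        (by rw [hiid']; exact (gmat_measurable i j).aestronglyMeasurable)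
      rw [hiid'] at h2
      rw [h1, ← h2]
    have hint : ∀ i j : Fin pc, Integrable (fun x => gmat (Matrix.of x) i j) (piGauss n pc) := by
      intro i j
      refine ⟨(gmat_measurable i j).aestronglyMeasurable, ?_⟩
      refine HasFiniteIntegral.of_bounded (C := 1) ?_
      filter_upwards [hνdet_ae] with x hx
      rw [Real.norm_eq_abs]
      exact gmat_entry_bound _ (isUnit_iff_ne_zero.2 hx) i j
    have hsum : ∑ i : Fin pc, ∫ x, gmat (Matrix.of x) i i ∂(piGauss n pc) = (n:ℝ) := by
      rw [← integral_finset_sum _ (fun i _ => hint i i)]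
      have hae : ∀ᵐ x ∂(piGauss n pc), ∑ i : Fin pc, gmat (Matrix.of x) i i = (n:ℝ) :=
        hνdet_ae.mono fun x hx => gmat_trace _ (isUnit_iff_ne_zero.2 hx)
      rw [integral_congr_ae hae, integral_const]
      simp
    have hdiagval : ∀ i : Fin pc, ∫ x, gmat (Matrix.of x) i i ∂(piGauss n pc) = (n:ℝ)/pc := by
      intro i
      have hall : ∀ j : Fin pc, ∫ x, gmat (Matrix.of x) j j ∂(piGauss n pc)
          = ∫ x, gmat (Matrix.of x) i i ∂(piGauss n pc) := fun j => integral_gmat_diag_eq i j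
      have hsum2 : (pc:ℝ) * ∫ x, gmat (Matrix.of x) i i ∂(piGauss n pc) = (n:ℝ) := by
        rw [← hsum, Finset.sum_congr rfl (fun j _ => hall j), Finset.sum_const]
        simp [mul_comm]
      have hpc0 : (pc:ℝ) ≠ 0 := Nat.cast_ne_zero.2 (Nat.pos_iff_ne_zero.1 hpcpos)
      field_simp
      linarith
    have hM : (Matrix.of fun i j : Fin pc =>
        ∫ ω, (Matrix.of (Cinv ω) * Matrix.of (C ω)) i j ∂μ)
        = ((n:ℝ)/pc) • (1 : Matrix (Fin pc) (Fin pc) ℝ) := by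
      ext i j
      rw [Matrix.smul_apply, Matrix.one_apply]
      show (∫ ω, (Matrix.of (Cinv ω) * Matrix.of (C ω)) i j ∂μ) = _
      rw [hMentry i j]
      by_cases hij : i = j
      · subst hij
        rw [hdiagval i]
        simp
      · rw [integral_gmat_offdiag hij]
        simp [hij]
    rw [hM, Matrix.smul_mulVec, Matrix.one_mulVec, dotProduct_smul]
    have hzz : z ⬝ᵥ z = ∑ i, z i ^ 2 := by
      simp [dotProduct, sq]
    rw [smul_eq_mul, hzz]
    rw [min_eq_left (show (n:ℝ) ≤ (pc:ℝ) from by exact_mod_cast hlt.le)]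
    ring
  · -- case pc ≤ n
    have hνdet : (piGauss n pc) {x | ((Matrix.of x)ᵀ * Matrix.of x).det = 0} = 0 :=
      cols_li_null n hge
    have hSm : MeasurableSet {x : Fin n → Fin pc → ℝ | ((Matrix.of x)ᵀ * Matrix.of x).det = 0} :=
      colgram_measurable (measurableSet_singleton 0)
    have hμdet : μ {ω | ((Matrix.of (C ω))ᵀ * Matrix.of (C ω)).det = 0} = 0 := by
      have : {ω | ((Matrix.of (C ω))ᵀ * Matrix.of (C ω)).det = 0}
          = C ⁻¹' {x | ((Matrix.of x)ᵀ * Matrix.of x).det = 0} := rfl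
      rw [this, ← Measure.map_apply hmeasC hSm, hiid']
      exact hνdet
    have hdet_ae : ∀ᵐ ω ∂μ, ((Matrix.of (C ω))ᵀ * Matrix.of (C ω)).det ≠ 0 := by
      rw [ae_iff]
      simpa only [not_not] using hμdet
    have hPone_ae : ∀ᵐ ω ∂μ, Matrix.of (Cinv ω) * Matrix.of (C ω) = 1 := by
      filter_upwards [hCinv, hdet_ae] with ω hmp hdet
      set A := Matrix.of (C ω) with hA
      set B := Matrix.of (Cinv ω) with hB
      have hA1 : A * B * A = A := hmp.1
      have hUnit : IsUnit (Aᵀ * A).det := isUnit_iff_ne_zero.2 hdet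
      have h1 : (Aᵀ * A) * (B * A) = Aᵀ * A := by
        calc (Aᵀ * A) * (B * A) = Aᵀ * (A * B * A) := by simp only [Matrix.mul_assoc]
          _ = Aᵀ * A := by rw [hA1]
      have h2 : (Aᵀ * A)⁻¹ * ((Aᵀ * A) * (B * A)) = (Aᵀ * A)⁻¹ * (Aᵀ * A) := by rw [h1]
      rw [← Matrix.mul_assoc, Matrix.nonsing_inv_mul _ hUnit, Matrix.one_mul] at h2
      exact h2
    have hM : (Matrix.of fun i j : Fin pc =>
        ∫ ω, (Matrix.of (Cinv ω) * Matrix.of (C ω)) i j ∂μ)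
        = (1 : Matrix (Fin pc) (Fin pc) ℝ) := by
      ext i j
      show (∫ ω, (Matrix.of (Cinv ω) * Matrix.of (C ω)) i j ∂μ) = _
      have h1 : ∫ ω, (Matrix.of (Cinv ω) * Matrix.of (C ω)) i j ∂μ
          = ∫ _ω, (1 : Matrix (Fin pc) (Fin pc) ℝ) i j ∂μ :=
        integral_congr_ae (hPone_ae.mono fun ω h => by simp only [h])
      rw [h1, integral_const]
      simp
    rw [hM, Matrix.one_mulVec]
    have hzz : z ⬝ᵥ z = ∑ i, z i ^ 2 := by
      simp [dotProduct, sq]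
    rw [hzz, min_eq_right (show (pc:ℝ) ≤ (n:ℝ) from by exact_mod_cast hge)]
    rcases Nat.eq_zero_or_pos pc with hpc0 | hpcpos
    · subst hpc0
      simp
    · have hpc0 : (pc:ℝ) ≠ 0 := Nat.cast_ne_zero.2 (Nat.pos_iff_ne_zero.1 hpcpos)
      field_simp
end
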